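/- arXiv:0711.1569 — 4 statements merged into one kernel-verified Lean document; each statement's English description precedes it below -/
import Mathlib

section
/- Let d_1 ≥ ... ≥ d_M with d_a ≥ 0 and d_1 > d_a, where 2 ≤ a ≤ M. Then the maximum over 0 < ε ≤ 2/(a(a+1)) of d_1 / (d_1 - a*ε*(d_1 - d_a)) equals d_1 / (d_1 - (2/(a+1))*(d_1 - d_a)) = (a+1) / ((a-1) + 2*(d_a/d_1)), and this quantity is at most 1 + 2/(a-1), which is at most 3 when a ≥ 2. -/
open Finset

/-- Price of capacity for uniform capacity parameters: exact value and bounds. -/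
theorem price_of_capacity_uniform (M a : ℕ) (d : ℕ → ℝ)
    (ha2 : 2 ≤ a) (haM : a ≤ M)
    (hd : ∀ j, 1 ≤ j → j < M → d (j + 1) ≤ d j)
    (hda0 : 0 ≤ d a)
    (hda : d a < d 1) :
    IsGreatest
      {x : ℝ | ∃ ε : ℝ, 0 < ε ∧ ε ≤ 2 / ((a : ℝ) * ((a : ℝ) + 1)) ∧
        x = d 1 / (d 1 - (a : ℝ) * ε * (d 1 - d a))}
      (d 1 / (d 1 - (2 / ((a : ℝ) + 1)) * (d 1 - d a))) ∧
    d 1 / (d 1 - (2 / ((a : ℝ) + 1)) * (d 1 - d a))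
      = ((a : ℝ) + 1) / (((a : ℝ) - 1) + 2 * (d a / d 1)) ∧
    ((a : ℝ) + 1) / (((a : ℝ) - 1) + 2 * (d a / d 1)) ≤ 1 + 2 / ((a : ℝ) - 1) ∧
    1 + 2 / ((a : ℝ) - 1) ≤ 3 := by
  have hA : (2:ℝ) ≤ (a:ℝ) := by exact_mod_cast ha2
  have hd1 : 0 < d 1 := lt_of_le_of_lt hda0 hda
  have hgap : 0 < d 1 - d a := sub_pos.2 hda
  have hA1 : (0:ℝ) < (a:ℝ) + 1 := by linarith
  have hAm1 : (0:ℝ) < (a:ℝ) - 1 := by linarith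
  have hApos : (0:ℝ) < (a:ℝ) := by linarith
  have hdeq : d 1 - (2 / ((a:ℝ) + 1)) * (d 1 - d a)
      = (((a:ℝ) - 1) * d 1 + 2 * d a) / ((a:ℝ) + 1) := by
    field_simp; ring
  have hden : 0 < d 1 - (2 / ((a:ℝ) + 1)) * (d 1 - d a) := by
    rw [hdeq]
    apply div_pos _ hA1
    nlinarith
  refine ⟨⟨⟨2 / ((a:ℝ) * ((a:ℝ) + 1)), ?_, le_refl _, ?_⟩, ?_⟩, ?_, ?_, ?_⟩
  · positivity
  · congr 2
    field_simp
  · rintro x ⟨ε, hε0, hεle, rfl⟩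
    have hkey : (a:ℝ) * ε * (d 1 - d a) ≤ (2 / ((a:ℝ) + 1)) * (d 1 - d a) := by
      apply mul_le_mul_of_nonneg_right _ hgap.le
      have : (a:ℝ) * ε ≤ (a:ℝ) * (2 / ((a:ℝ) * ((a:ℝ) + 1))) :=
        mul_le_mul_of_nonneg_left hεle hApos.le
      calc (a:ℝ) * ε ≤ (a:ℝ) * (2 / ((a:ℝ) * ((a:ℝ) + 1))) := this
        _ = 2 / ((a:ℝ) + 1) := by field_simp
    exact div_le_div_of_nonneg_left hd1.le hden (by linarith)
  · rw [hdeq]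
    rw [div_div_eq_mul_div, div_eq_div_iff (by positivity)
      (by nlinarith [div_nonneg hda0 hd1.le])]
    field_simp
  · have h1 : ((a:ℝ) - 1) ≤ ((a:ℝ) - 1) + 2 * (d a / d 1) := by
      nlinarith [div_nonneg hda0 hd1.le]
    have h2 : 1 + 2 / ((a:ℝ) - 1) = ((a:ℝ) + 1) / ((a:ℝ) - 1) := by
      field_simp; ring
    rw [h2]
    exact div_le_div_of_nonneg_left (by linarith) hAm1 h1
  · have : (1:ℝ) ≤ (a:ℝ) - 1 := by linarith
    have := div_le_one_of_le₀ (by linarith : (2:ℝ) ≤ 2 * ((a:ℝ)-1)) (by linarith)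
    calc 1 + 2 / ((a:ℝ) - 1) ≤ 1 + 2 := by
            have : 2 / ((a:ℝ) - 1) ≤ 2 / 1 := by
              apply div_le_div_of_nonneg_left (by norm_num) (by norm_num) (by linarith)
            linarith
      _ = 3 := by norm_num
end

section
/- Let d_1 ≥ ... ≥ d_M with d_1 > 0, and let ε_1,...,ε_M ≥ 0 satisfy Σ i ε_i ≤ 1 with capacity κ = max{j : ε_j > 0} where 2 ≤ κ < M and d_1 > d_κ. Suppose H^{OPT}({ε_j}) = d_1 - Σ_{j=2}^{M} j ε_j (d_1-d_j) < d_1 and d_1 > d_{κ+1}. Then there exist ε̃_1,...,ε̃_M ≥ 0 with Σ i ε̃_i ≤ 1, ε̃_{κ+1} > 0, ε̃_j = 0 for j > κ+1, and H^{OPT}({ε̃_j}) ≥ H^{OPT}({ε_j}). -/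
open Finset

/-- Capacity can be increased by one without loss in the optimal value. -/
theorem capacity_increase (M κ : ℕ) (d ε : ℕ → ℝ)
    (hκ2 : 2 ≤ κ) (hκM : κ < M)
    (hd : ∀ j, 1 ≤ j → j < M → d (j + 1) ≤ d j)
    (hd1 : 0 < d 1)
    (hε : ∀ j ∈ Icc 1 M, 0 ≤ ε j)
    (hεsum : ∑ i ∈ Icc 1 M, (i : ℝ) * ε i ≤ 1)
    (hεκ : 0 < ε κ)
    (hεzero : ∀ j, κ < j → ε j = 0)
    (hdκ : d κ < d 1)
    (hdκ1 : d (κ + 1) < d 1)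
    (hlt : d 1 - ∑ j ∈ Icc 2 M, (j : ℝ) * ε j * (d 1 - d j) < d 1) :
    ∃ ε' : ℕ → ℝ,
      (∀ j ∈ Icc 1 M, 0 ≤ ε' j) ∧
      (∑ i ∈ Icc 1 M, (i : ℝ) * ε' i ≤ 1) ∧
      0 < ε' (κ + 1) ∧
      (∀ j, κ + 1 < j → ε' j = 0) ∧
      d 1 - ∑ j ∈ Icc 2 M, (j : ℝ) * ε j * (d 1 - d j)
        ≤ d 1 - ∑ j ∈ Icc 2 M, (j : ℝ) * ε' j * (d 1 - d j) := by
  have hκpos : (0:ℝ) < (κ:ℝ) := by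
    have : 0 < κ := by omega
    exact_mod_cast this
  have hdstep : d (κ+1) ≤ d κ := hd κ (by omega) hκM
  set δ : ℝ := ε κ / 2 with hδdef
  have hδpos : 0 < δ := by positivity
  set A : ℝ := d 1 - d κ with hA
  set B : ℝ := d 1 - d (κ+1) with hB
  have hApos : 0 < A := sub_pos.mpr hdκ
  have hBpos : 0 < B := sub_pos.mpr hdκ1
  have hAB : A ≤ B := by simp only [hA, hB]; linarith
  set η : ℝ := (κ:ℝ) * δ * A / (((κ:ℝ)+1) * B) with hηdef
  have hηpos : 0 < η := by
    apply div_pos (by positivity) (by positivity)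
  have hkey : ((κ:ℝ)+1) * η * B = (κ:ℝ) * δ * A := by
    rw [hηdef]; field_simp
  have hle : ((κ:ℝ)+1) * η ≤ (κ:ℝ) * δ := by
    have h1 : ((κ:ℝ)+1) * η * B ≤ (κ:ℝ) * δ * B := by
      rw [hkey]
      have : 0 ≤ (κ:ℝ) * δ := by positivity
      nlinarith
    exact le_of_mul_le_mul_right h1 hBpos
  set ε' : ℕ → ℝ := fun j => if j = κ then ε κ - δ else if j = κ+1 then η else ε j with hε'def
  have hε'κ : ε' κ = ε κ - δ := by simp [hε'def]
  have hε'κ1 : ε' (κ+1) = η := by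
    simp only [hε'def]
    rw [if_neg (by omega)]; simp
  have hε'other : ∀ j, j ≠ κ → j ≠ κ+1 → ε' j = ε j := by
    intro j h1 h2; simp [hε'def, h1, h2]
  have hpairsub1 : ({κ, κ+1} : Finset ℕ) ⊆ Icc 1 M := by
    intro x hx
    simp only [Finset.mem_insert, Finset.mem_singleton] at hx
    rcases hx with rfl | rfl <;> simp [Finset.mem_Icc] <;> omega
  have hpairsub2 : ({κ, κ+1} : Finset ℕ) ⊆ Icc 2 M := by
    intro x hx
    simp only [Finset.mem_insert, Finset.mem_singleton] at hx
    rcases hx with rfl | rfl <;> simp [Finset.mem_Icc] <;> omega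
  have hne : κ ≠ κ + 1 := by omega
  have hεκ1zero : ε (κ+1) = 0 := hεzero _ (by omega)
  -- sum of differences for weights
  have hsum1 : ∑ i ∈ Icc 1 M, ((i:ℝ) * ε' i - (i:ℝ) * ε i)
      = -((κ:ℝ) * δ) + ((κ:ℝ)+1) * η := by
    rw [← Finset.sum_subset hpairsub1 (by
      intro x _ hx
      simp only [Finset.mem_insert, Finset.mem_singleton, not_or] at hx
      rw [hε'other x hx.1 hx.2]; ring)]
    rw [Finset.sum_pair hne, hε'κ, hε'κ1, hεκ1zero]
    push_cast
    ring
  have hweights : ∑ i ∈ Icc 1 M, (i:ℝ) * ε' i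
      = (∑ i ∈ Icc 1 M, (i:ℝ) * ε i) - (κ:ℝ) * δ + ((κ:ℝ)+1) * η := by
    rw [Finset.sum_sub_distrib] at hsum1
    linarith
  -- sum of differences for objective
  have hsum2 : ∑ j ∈ Icc 2 M, ((j:ℝ) * ε' j * (d 1 - d j) - (j:ℝ) * ε j * (d 1 - d j))
      = -((κ:ℝ) * δ * A) + ((κ:ℝ)+1) * η * B := by
    rw [← Finset.sum_subset hpairsub2 (by
      intro x _ hx
      simp only [Finset.mem_insert, Finset.mem_singleton, not_or] at hx
      rw [hε'other x hx.1 hx.2]; ring)]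
    rw [Finset.sum_pair hne, hε'κ, hε'κ1, hεκ1zero]
    simp only [hA, hB]
    push_cast
    ring
  have hobj : ∑ j ∈ Icc 2 M, (j:ℝ) * ε' j * (d 1 - d j)
      = ∑ j ∈ Icc 2 M, (j:ℝ) * ε j * (d 1 - d j) := by
    rw [Finset.sum_sub_distrib] at hsum2
    have h0 : -((κ:ℝ) * δ * A) + ((κ:ℝ)+1) * η * B = 0 := by rw [hkey]; ring
    linarith
  refine ⟨ε', ?_, ?_, ?_, ?_, ?_⟩
  · intro j hj
    by_cases h1 : j = κ
    · rw [h1, hε'κ]; rw [hδdef]; linarith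
    by_cases h2 : j = κ+1
    · rw [h2, hε'κ1]; linarith
    · rw [hε'other j h1 h2]; exact hε j hj
  · rw [hweights]; linarith
  · rw [hε'κ1]; exact hηpos
  · intro j hj
    rw [hε'other j (by omega) (by omega)]
    exact hεzero j (by omega)
  · rw [hobj]
end

section
/- Let 0 < ε ≤ 2/(m(m+1)) and let d_1 ≥ ... ≥ d_{m+1} with d_1 > d_j for some 2 ≤ j ≤ m. Define ε̃ = min{ 2/((m+1)(m+2)), ε * (Σ_{j=2}^{m} j(d_1-d_j)) / (Σ_{j=2}^{m+1} j(d_1-d_j)) }. Then the uniform capacity vector with ε̃_j = ε̃ for j ≤ m+1 and 0 otherwise satisfies Σ_{i=1}^{m+1} i*ε̃ ≤ 1 and d_1 - Σ_{j=2}^{m+1} j*ε̃*(d_1-d_j) ≥ d_1 - Σ_{j=2}^{m} j*ε*(d_1-d_j). -/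
open Finset

/-- Increasing capacity from `m` to `m+1` with uniform parameters,
without decreasing the optimal value. -/
theorem capacity_increase_uniform (m : ℕ) (hm : 2 ≤ m) (d : ℕ → ℝ) (ε ε' : ℝ)
    (hd : ∀ j, 1 ≤ j → j ≤ m → d (j + 1) ≤ d j)
    (hstrict : ∃ j, 2 ≤ j ∧ j ≤ m ∧ d j < d 1)
    (hε0 : 0 < ε)
    (hεle : ε ≤ 2 / ((m : ℝ) * ((m : ℝ) + 1)))
    (hε' : ε' = min (2 / (((m : ℝ) + 1) * ((m : ℝ) + 2)))
      (ε * (∑ j ∈ Icc 2 m, (j : ℝ) * (d 1 - d j)) /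
        (∑ j ∈ Icc 2 (m + 1), (j : ℝ) * (d 1 - d j)))) :
    (∑ i ∈ Icc 1 (m + 1), (i : ℝ) * ε' ≤ 1) ∧
    d 1 - ∑ j ∈ Icc 2 m, (j : ℝ) * ε * (d 1 - d j)
      ≤ d 1 - ∑ j ∈ Icc 2 (m + 1), (j : ℝ) * ε' * (d 1 - d j) := by
  have hdle : ∀ j, 1 ≤ j → j ≤ m + 1 → d j ≤ d 1 := by
    intro j h1 h2
    induction j with
    | zero => omega
    | succ k ih =>
      rcases Nat.lt_or_ge 1 (k + 1) with h | h
      · have hk1 : 1 ≤ k := by omega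
        have := hd k hk1 (by omega)
        exact this.trans (ih hk1 (by omega))
      · have : k = 0 := by omega
        subst this; exact le_refl _
  set A := ∑ j ∈ Icc 2 m, (j : ℝ) * (d 1 - d j) with hA
  set B := ∑ j ∈ Icc 2 (m + 1), (j : ℝ) * (d 1 - d j) with hB
  have hterm : ∀ j ∈ Icc 2 (m + 1), 0 ≤ (j : ℝ) * (d 1 - d j) := by
    intro j hj
    simp only [Finset.mem_Icc] at hj
    apply mul_nonneg (by positivity)
    linarith [hdle j (by omega) hj.2]
  have hApos : 0 < A := by
    obtain ⟨j₀, hj2, hjm, hjd⟩ := hstrict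
    have hmem : j₀ ∈ Icc 2 m := Finset.mem_Icc.mpr ⟨hj2, hjm⟩
    have h1 : (j₀ : ℝ) * (d 1 - d j₀) ≤ A :=
      Finset.single_le_sum (fun j hj => hterm j (by
        simp only [Finset.mem_Icc] at hj ⊢; omega)) hmem
    have hj0 : (0 : ℝ) < j₀ := by exact_mod_cast Nat.lt_of_lt_of_le (by norm_num) hj2
    nlinarith
  have hBA : A ≤ B := by
    rw [hB, Finset.sum_Icc_succ_top (by omega : 2 ≤ m + 1)]
    have := hterm (m + 1) (Finset.mem_Icc.mpr ⟨by omega, le_refl _⟩)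
    linarith
  have hBpos : 0 < B := lt_of_lt_of_le hApos hBA
  have hε'1 : ε' ≤ 2 / (((m : ℝ) + 1) * ((m : ℝ) + 2)) := hε' ▸ min_le_left _ _
  have hε'2 : ε' ≤ ε * A / B := hε' ▸ min_le_right _ _
  have hεB : ε' * B ≤ ε * A := (le_div_iff₀ hBpos).mp hε'2
  constructor
  · have hgauss : (∑ i ∈ Icc 1 (m + 1), (i : ℝ)) = ((m : ℝ) + 1) * ((m : ℝ) + 2) / 2 := by
      have h1 : (∑ i ∈ Icc 1 (m + 1), i) * 2 = (m + 1) * (m + 2) := by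
        have h2 : (∑ i ∈ range (m + 2), i) * 2 = (m + 2) * (m + 1) :=
          Finset.sum_range_id_mul_two (m + 2)
        have h3 : (∑ i ∈ range (m + 2), i) = ∑ i ∈ Icc 1 (m + 1), i := by
          rw [Finset.range_eq_Ico, show Finset.Icc 1 (m + 1) = Finset.Ico 1 (m + 2) from rfl,
            Finset.sum_eq_sum_Ico_succ_bot (by omega : 0 < m + 2)]
          simp
        rw [← h3, h2, Nat.mul_comm]
      have := congrArg (Nat.cast : ℕ → ℝ) h1
      push_cast at this
      linarith
    have : (∑ i ∈ Icc 1 (m + 1), (i : ℝ) * ε') = (((m : ℝ) + 1) * ((m : ℝ) + 2) / 2) * ε' := by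
      rw [← hgauss, ← Finset.sum_mul]
    rw [this]
    have hpos : (0 : ℝ) < ((m : ℝ) + 1) * ((m : ℝ) + 2) := by positivity
    rw [le_div_iff₀ hpos] at hε'1
    linarith
  · have hL : (∑ j ∈ Icc 2 m, (j : ℝ) * ε * (d 1 - d j)) = ε * A := by
      rw [hA, Finset.mul_sum]; apply Finset.sum_congr rfl; intro j hj; ring
    have hR : (∑ j ∈ Icc 2 (m + 1), (j : ℝ) * ε' * (d 1 - d j)) = ε' * B := by
      rw [hB, Finset.mul_sum]; apply Finset.sum_congr rfl; intro j hj; ring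
    rw [hL, hR]
    linarith
end

section
/- Let p_1 > p_2 > ... > p_M > 0 and v_1 ≥ ... ≥ v_{M+1} ≥ 0, with VCG payments h_j = Σ_{i=j}^{M-1} (p_i - p_{i+1}) v_{i+1} + p_M v_{M+1} for j ≤ M and h_j = 0 for the unassigned bidders. Then for each bidder j ≤ M and each alternative spike position k ≤ M, we have p_j * v_j - h_j ≥ p_k * v_j - h_k; i.e., no bidder prefers another bidder's spike-payment pair (the VCG outcome is a Walrasian equilibrium / envy-free). -/
open Finset

/-- The VCG outcome for probability spikes is envy-free (Walrasian). -/
theorem vcg_envy_free (M : ℕ) (hM : 1 ≤ M) (p v h : ℕ → ℝ)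
    (hp : ∀ j, 1 ≤ j → j < M → p (j + 1) < p j)
    (hpM : 0 < p M)
    (hv : ∀ j, 1 ≤ j → j ≤ M → v (j + 1) ≤ v j)
    (hvnn : 0 ≤ v (M + 1))
    (hh : ∀ j ∈ Icc 1 M,
      h j = ∑ i ∈ Icc j (M - 1), (p i - p (i + 1)) * v (i + 1) + p M * v (M + 1)) :
    ∀ j ∈ Icc 1 M, ∀ k ∈ Icc 1 M,
      p k * v j - h k ≤ p j * v j - h j := by
  intro j hj k hk
  simp only [mem_Icc] at hj hk
  have hstep : ∀ m, 1 ≤ m → m + 1 ≤ M →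
      h m = (p m - p (m + 1)) * v (m + 1) + h (m + 1) := by
    intro m hm1 hmM
    rw [hh m (mem_Icc.2 ⟨hm1, by omega⟩), hh (m + 1) (mem_Icc.2 ⟨by omega, hmM⟩)]
    have h1 : m ≤ M - 1 := by omega
    rw [Finset.Icc_eq_cons_Ioc h1, Finset.sum_cons, ← Finset.Icc_add_one_left_eq_Ioc]
    ring
  have hvmono : ∀ a b, 1 ≤ a → a ≤ b → b ≤ M + 1 → v b ≤ v a := by
    intro a b ha hab hbM
    induction b with
    | zero => omega
    | succ n ih =>
      rcases Nat.eq_or_lt_of_le hab with rfl | hlt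
      · exact le_refl _
      · exact le_trans (hv n (by omega) (by omega)) (ih (by omega) (by omega))
  set u := fun m => p m * v j - h m with hu
  have hadj : ∀ m, 1 ≤ m → m + 1 ≤ M →
      u (m + 1) - u m = (p m - p (m + 1)) * (v (m + 1) - v j) := by
    intro m hm1 hmM
    simp only [hu]
    rw [hstep m hm1 hmM]; ring
  have hpnn : ∀ m, 1 ≤ m → m + 1 ≤ M → 0 ≤ p m - p (m + 1) := by
    intro m hm1 hmM
    have := hp m hm1 (by omega)
    linarith
  have hup : ∀ b, b ≤ j → ∀ a, 1 ≤ a → a ≤ b → u a ≤ u b := by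
    intro b hb
    induction b with
    | zero => intro a ha hab; omega
    | succ n ih =>
      intro a ha hab
      rcases Nat.eq_or_lt_of_le hab with rfl | hlt
      · exact le_refl _
      · have h1 : u a ≤ u n := ih (by omega) a ha (by omega)
        have h2 : u n ≤ u (n + 1) := by
          have hd := hadj n (by omega) (by omega)
          have hpd := hpnn n (by omega) (by omega)
          have hvd : v j ≤ v (n + 1) := hvmono (n + 1) j (by omega) (by omega) (by omega)
          nlinarith
        linarith
  have hdown : ∀ b, b ≤ M → j ≤ b → u b ≤ u j := by
    intro b
    induction b with
    | zero => intro _ hb; omega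
    | succ n ih =>
      intro hbM hjb
      rcases Nat.eq_or_lt_of_le hjb with hje | hlt
      · rw [← hje]
      · have h1 : u n ≤ u j := ih (by omega) (by omega)
        have h2 : u (n + 1) ≤ u n := by
          have hd := hadj n (by omega) (by omega)
          have hpd := hpnn n (by omega) (by omega)
          have hvd : v (n + 1) ≤ v j := hvmono j (n + 1) hj.1 (by omega) (by omega)
          nlinarith
        linarith
  rcases le_or_gt k j with hkj | hjk
  · exact hup j (le_refl j) k hk.1 hkj
  · exact hdown k hk.2 (le_of_lt hjk)
end
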